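/- arXiv:1610.00338 — 3 statements merged into one kernel-verified Lean document; each statement's English description precedes it below -/
import Mathlib

section
/- For any finite set N ⊆ ℤ² and any natural number k, there exists α ∈ ℕ such that N^α + kN = N^α + N^k, where N^α denotes the α-fold Minkowski sum of N with itself (N^0 = {0}), kN = {k·x | x ∈ N}, and + denotes Minkowski sum. In fact any α with α + k > |N|·(k−1) works. -/
open Pointwise

/-- `mpow N k` is the `k`-fold Minkowski sum of `N` with itself (`mpow N 0 = {0}`). -/
def mpow (N : Set (ℤ × ℤ)) : ℕ → Set (ℤ × ℤ)
  | 0 => {0}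
  | k + 1 => N + mpow N k

/-- `dil k N = {k • x | x ∈ N}`. -/
def dil (k : ℕ) (N : Set (ℤ × ℤ)) : Set (ℤ × ℤ) := (fun v => (k : ℤ) • v) '' N

lemma mem_mpow_iff (N : Set (ℤ × ℤ)) (n : ℕ) (x : ℤ × ℤ) :
    x ∈ mpow N n ↔ ∃ m : Multiset (ℤ × ℤ), (∀ a ∈ m, a ∈ N) ∧ m.card = n ∧ m.sum = x := by
  induction n generalizing x with
  | zero =>
    simp only [mpow]
    constructor
    · rintro rfl
      exact ⟨0, by simp⟩
    · rintro ⟨m, hm, hc, hs⟩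
      rw [Multiset.card_eq_zero] at hc
      subst hc
      simpa using hs.symm
  | succ n ih =>
    simp only [mpow, Set.mem_add]
    constructor
    · rintro ⟨a, ha, y, hy, rfl⟩
      obtain ⟨m, hm, hc, hs⟩ := (ih y).1 hy
      refine ⟨a ::ₘ m, ?_, by simp [hc], by simp [hs]⟩
      intro b hb
      rcases Multiset.mem_cons.1 hb with rfl | hb
      · exact ha
      · exact hm b hb
    · rintro ⟨m, hm, hc, hs⟩
      obtain ⟨a, ha⟩ := Multiset.exists_mem_of_ne_zero
        (by intro h; subst h; simp at hc : m ≠ 0)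
      obtain ⟨m', rfl⟩ := Multiset.exists_cons_of_mem ha
      exact ⟨a, hm a (Multiset.mem_cons_self a m'),
        m'.sum, (ih m'.sum).2 ⟨m', fun b hb => hm b (Multiset.mem_cons_of_mem hb),
          by simpa using hc, rfl⟩, by simpa using hs⟩

lemma smul_mem_mpow {N : Set (ℤ × ℤ)} {a : ℤ × ℤ} (ha : a ∈ N) (k : ℕ) :
    (k : ℤ) • a ∈ mpow N k := by
  rw [mem_mpow_iff]
  exact ⟨Multiset.replicate k a, fun b hb => (Multiset.eq_of_mem_replicate hb) ▸ ha,
    Multiset.card_replicate k a, by simp [Multiset.sum_replicate]⟩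

theorem stmt_0 (N : Set (ℤ × ℤ)) (hN : N.Finite) (k : ℕ) :
    (∃ α : ℕ, mpow N α + dil k N = mpow N α + mpow N k) ∧
    (∀ α : ℕ, N.ncard * (k - 1) < α + k →
      mpow N α + dil k N = mpow N α + mpow N k) := by
  have main : ∀ α : ℕ, N.ncard * (k - 1) < α + k →
      mpow N α + dil k N = mpow N α + mpow N k := by
    intro α hα
    rcases Nat.eq_zero_or_pos k with rfl | hk
    · -- k = 0
      rcases N.eq_empty_or_nonempty with rfl | ⟨a, ha⟩
      · have : α ≠ 0 := by omega
        obtain ⟨β, rfl⟩ := Nat.exists_eq_succ_of_ne_zero this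
        simp [mpow, dil, Set.empty_add]
      · have h1 : dil 0 N = {0} := by
          ext x
          simp only [dil, Set.mem_image, Set.mem_singleton_iff]
          constructor
          · rintro ⟨v, hv, rfl⟩; simp
          · rintro rfl; exact ⟨a, ha, by simp⟩
        rw [h1]; rfl
    · apply Set.Subset.antisymm
      · -- easy: dil k N ⊆ mpow N k
        apply Set.add_subset_add_left
        rintro _ ⟨a, ha, rfl⟩
        exact smul_mem_mpow ha k
      · rintro z hz
        rw [Set.mem_add] at hz
        obtain ⟨x, hx, y, hy, rfl⟩ := hz
        obtain ⟨m₁, hm₁, hc₁, hs₁⟩ := (mem_mpow_iff N α x).1 hx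
        obtain ⟨m₂, hm₂, hc₂, hs₂⟩ := (mem_mpow_iff N k y).1 hy
        set m := m₁ + m₂ with hm
        have hmem : ∀ a ∈ m, a ∈ N := by
          intro a ha
          rcases Multiset.mem_add.1 ha with h | h
          · exact hm₁ a h
          · exact hm₂ a h
        have hcard : m.card = α + k := by simp [hm, hc₁, hc₂]
        -- pigeonhole: some element has count ≥ k
        have hpig : ∃ a ∈ m, k ≤ m.count a := by
          by_contra hcon
          push_neg at hcon
          have hle : ∀ a ∈ m.toFinset, m.count a ≤ k - 1 := by
            intro a ha
            have := hcon a (Multiset.mem_toFinset.1 ha)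
            omega
          have h1 : m.card = ∑ a ∈ m.toFinset, m.count a :=
            (Multiset.toFinset_sum_count_eq m).symm
          have h2 : ∑ a ∈ m.toFinset, m.count a ≤ m.toFinset.card * (k - 1) := by
            calc ∑ a ∈ m.toFinset, m.count a ≤ ∑ _a ∈ m.toFinset, (k - 1) :=
                  Finset.sum_le_sum hle
              _ = m.toFinset.card * (k - 1) := by rw [Finset.sum_const, smul_eq_mul]
          have h3 : m.toFinset.card ≤ N.ncard := by
            rw [Set.ncard_eq_toFinset_card N hN]
            apply Finset.card_le_card
            intro a ha
            simpa using hmem a (Multiset.mem_toFinset.1 ha)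
          have h4 : m.toFinset.card * (k - 1) ≤ N.ncard * (k - 1) :=
            Nat.mul_le_mul_right _ h3
          omega
        obtain ⟨a, ham, hacount⟩ := hpig
        have hrep : Multiset.replicate k a ≤ m := by
          rw [Multiset.le_iff_count]
          intro b
          rcases eq_or_ne b a with rfl | hne
          · simpa using hacount
          · simp [Multiset.count_replicate, hne.symm]
        set r := m - Multiset.replicate k a with hr
        have hsplit : m = Multiset.replicate k a + r := by
          rw [hr, add_comm]
          exact (tsub_add_cancel_of_le hrep).symm
        have hrsub : r ≤ m := Multiset.sub_le_self m _
        have hrcard : r.card = α := by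
          have := congrArg Multiset.card hsplit
          simp [hcard] at this
          omega
        have hrx : r.sum ∈ mpow N α := by
          rw [mem_mpow_iff]
          exact ⟨r, fun b hb => hmem b (Multiset.mem_of_le hrsub hb), hrcard, rfl⟩
        have hay : (k : ℤ) • a ∈ dil k N :=
          ⟨a, hmem a ham, rfl⟩
        rw [Set.mem_add]
        refine ⟨r.sum, hrx, (k : ℤ) • a, hay, ?_⟩
        have hsum : m.sum = (k : ℤ) • a + r.sum := by
          conv_lhs => rw [hsplit]
          simp [Multiset.sum_replicate]
        have : x + y = m.sum := by rw [hm, Multiset.sum_add, hs₁, hs₂]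
        rw [this, hsum, add_comm]
  exact ⟨⟨N.ncard * (k - 1) + 1, main _ (by omega)⟩, main⟩
end

section
/- If N ⊆ ℤ² is a finite complete neighborhood, then its convex hull in ℝ² contains an open neighborhood of the origin; equivalently, there exists η > 0 such that the square [−η,η]×[−η,η] is contained in the convex hull of N. -/
open Pointwise

/-- The canonical embedding of `ℤ²` into `ℝ²`. -/
def emb (v : ℤ × ℤ) : ℝ × ℝ := ((v.1 : ℝ), (v.2 : ℝ))

lemma emb_add (a b : ℤ × ℤ) : emb (a + b) = emb a + emb b := by
  simp [emb, Prod.ext_iff]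

lemma mem_smul_hull (N : Set (ℤ × ℤ)) :
    ∀ k : ℕ, ∀ v ∈ mpow N (k + 1),
      emb v ∈ ((k : ℝ) + 1) • convexHull ℝ (emb '' N) := by
  intro k
  induction k with
  | zero =>
    intro v hv
    obtain ⟨n, hn, w, hw, rfl⟩ := hv
    simp only [mpow, Set.mem_singleton_iff] at hw
    subst hw
    simp only [add_zero, Nat.cast_zero, zero_add, one_smul]
    exact subset_convexHull ℝ _ ⟨n, hn, rfl⟩
  | succ k ih =>
    intro v hv
    obtain ⟨n, hn, w, hw, rfl⟩ := hv
    have h1 : emb n ∈ convexHull ℝ (emb '' N) :=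
      subset_convexHull ℝ _ ⟨n, hn, rfl⟩
    have h2 := ih w hw
    have hconv := convex_convexHull ℝ (emb '' N)
    have hk1 : ((k : ℝ) + 1 + 1) = 1 + ((k : ℝ) + 1) := by ring
    rw [emb_add, Nat.cast_succ, hk1, hconv.add_smul zero_le_one (by positivity)]
    exact Set.add_mem_add (by simpa using h1) h2

/-- From completeness, each nonzero lattice point gives a scaled point in the hull. -/
lemma axis_pt (N : Set (ℤ × ℤ))
    (hcomplete : (⋃ k : ℕ, mpow N k) = Set.univ) (v : ℤ × ℤ) (hv : v ≠ 0) :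
    ∃ c : ℝ, 0 < c ∧ c • emb v ∈ convexHull ℝ (emb '' N) := by
  have : v ∈ ⋃ k : ℕ, mpow N k := by rw [hcomplete]; trivial
  obtain ⟨k, hk⟩ := Set.mem_iUnion.mp this
  match k with
  | 0 => simp only [mpow, Set.mem_singleton_iff] at hk; exact absurd hk hv
  | k + 1 =>
    have h := mem_smul_hull N k v hk
    obtain ⟨y, hy, hyy⟩ := Set.mem_smul_set.mp h
    refine ⟨((k : ℝ) + 1)⁻¹, by positivity, ?_⟩
    rw [← hyy, smul_smul, inv_mul_cancel₀ (by positivity), one_smul]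
    exact hy

theorem stmt_9 (N : Set (ℤ × ℤ)) (hN : N.Finite)
    (hcomplete : (⋃ k : ℕ, mpow N k) = Set.univ) :
    ∃ η : ℝ, 0 < η ∧
      {p : ℝ × ℝ | |p.1| ≤ η ∧ |p.2| ≤ η} ⊆ convexHull ℝ (emb '' N) := by
  set C := convexHull ℝ (emb '' N) with hC
  have hconv : Convex ℝ C := convex_convexHull ℝ _
  obtain ⟨a, ha, hA⟩ := axis_pt N hcomplete (1, 0) (by decide)
  obtain ⟨b, hb, hB⟩ := axis_pt N hcomplete (-1, 0) (by decide)
  obtain ⟨c, hc, hCc⟩ := axis_pt N hcomplete (0, 1) (by decide)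
  obtain ⟨d, hd, hD⟩ := axis_pt N hcomplete (0, -1) (by decide)
  have hA' : ((a, 0) : ℝ × ℝ) ∈ C := by simpa [emb, Prod.smul_mk] using hA
  have hB' : ((-b, 0) : ℝ × ℝ) ∈ C := by simpa [emb, Prod.smul_mk] using hB
  have hCc' : ((0, c) : ℝ × ℝ) ∈ C := by simpa [emb, Prod.smul_mk] using hCc
  have hD' : ((0, -d) : ℝ × ℝ) ∈ C := by simpa [emb, Prod.smul_mk] using hD
  -- 0 ∈ C
  have h0 : ((0, 0) : ℝ × ℝ) ∈ C := by
    have := hconv hA' hB' (a := b / (a + b)) (b := a / (a + b))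
      (by positivity) (by positivity) (by field_simp; ring)
    convert this using 1
    have hab : a + b ≠ 0 := by positivity
    ext <;> simp <;> field_simp <;> ring
  set m := min (min a b) (min c d) with hm
  have hma : m ≤ a := le_trans (min_le_left _ _) (min_le_left _ _)
  have hmb : m ≤ b := le_trans (min_le_left _ _) (min_le_right _ _)
  have hmc : m ≤ c := le_trans (min_le_right _ _) (min_le_left _ _)
  have hmd : m ≤ d := le_trans (min_le_right _ _) (min_le_right _ _)
  have hmpos : 0 < m := by positivity
  refine ⟨m / 2, by positivity, ?_⟩
  rintro ⟨x, y⟩ ⟨hx, hy⟩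
  simp only at hx hy
  -- (2x, 0) ∈ C and (0, 2y) ∈ C
  have hX : ((2 * x, 0) : ℝ × ℝ) ∈ C := by
    rcases le_or_gt 0 x with h | h
    · have := hconv.smul_mem_of_zero_mem h0 hA' (t := 2 * x / a)
        ⟨by positivity, by
          rw [div_le_one ha]
          nlinarith [abs_of_nonneg h ▸ hx]⟩
      convert this using 1
      have : |x| = x := abs_of_nonneg h
      ext <;> simp <;> field_simp
    · have := hconv.smul_mem_of_zero_mem h0 hB' (t := -(2 * x) / b)
        ⟨div_nonneg (by linarith) hb.le, by
          rw [div_le_one hb]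
          have : |x| = -x := abs_of_neg h
          nlinarith [this ▸ hx]⟩
      convert this using 1
      ext <;> simp <;> field_simp <;> ring
  have hY : ((0, 2 * y) : ℝ × ℝ) ∈ C := by
    rcases le_or_gt 0 y with h | h
    · have := hconv.smul_mem_of_zero_mem h0 hCc' (t := 2 * y / c)
        ⟨by positivity, by
          rw [div_le_one hc]
          have : |y| = y := abs_of_nonneg h
          nlinarith [this ▸ hy]⟩
      convert this using 1
      ext <;> simp <;> field_simp
    · have := hconv.smul_mem_of_zero_mem h0 hD' (t := -(2 * y) / d)
        ⟨div_nonneg (by linarith) hd.le, by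
          rw [div_le_one hd]
          have : |y| = -y := abs_of_neg h
          nlinarith [this ▸ hy]⟩
      convert this using 1
      ext <;> simp <;> field_simp <;> ring
  have := hconv hX hY (a := (1:ℝ)/2) (b := (1:ℝ)/2) (by norm_num) (by norm_num) (by norm_num)
  convert this using 1
  ext <;> simp <;> ring
end

section
/- If N ⊆ ℤ² is convex in the sense that N = conv(N) ∩ ℤ², then for every p ∈ ℕ, N^p is also convex in this sense: N^p = conv(N^p) ∩ ℤ². -/
open Pointwise

/-- `M ⊆ ℤ²` is lattice-convex if `M = conv(M) ∩ ℤ²`. -/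
def LatticeConvex (M : Set (ℤ × ℤ)) : Prop :=
  ∀ z : ℤ × ℤ, z ∈ M ↔ emb z ∈ convexHull ℝ (emb '' M)

/-!
By Carathéodory, a lattice point `z` of `conv (N^p) = p • conv N` lies in `p • T` for a simplex
`T` spanned by affinely independent points of `N`. Subtracting vertices whose barycentric weight
is at least `1` reduces to the case where all weights are `< 1`; their sum `p` is then less than
the number of vertices, so `p ≤ 2`, and only `p = 2` with a genuine triangle `T = conv {v₀, v₁, v₂}`
is left. There the point `z' = v₀ + v₁ + v₂ - z` has weights `1 - αⱼ`, so it lies in `T`;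
replacing the vertex of smallest weight by `z'` gives a lattice triangle inside `T`, of area
scaled by `1 - αᵢ < 1`, whose double still contains `z`. Descent on the (integral) area splits `z`
into two lattice points of `T`, and these lie in `N` by lattice-convexity.
-/

open Set Function Finset

universe u

section DilatedHull

variable {ι : Type*} {E : Type u} [Fintype ι] [AddCommGroup E] [Module ℝ E]

def MemDilatedHull (p : ℝ) (u : ι → E) (x : E) : Prop :=
  ∃ w : ι → ℝ, (∀ i, 0 ≤ w i) ∧ ∑ i, w i = p ∧ ∑ i, w i • u i = x

lemma MemDilatedHull.mem_convexHull {u : ι → E} {x : E} (h : MemDilatedHull 1 u x) :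
    x ∈ convexHull ℝ (range u) := by
  obtain ⟨w, hw₀, hw₁, rfl⟩ := h
  exact (convex_convexHull ℝ _).sum_mem (fun i _ => hw₀ i) hw₁
    fun i _ => subset_convexHull ℝ _ (mem_range_self i)

lemma MemDilatedHull.comp_equiv {κ : Type*} [Fintype κ] {p : ℝ} {u : ι → E} {x : E}
    (h : MemDilatedHull p u x) (e : κ ≃ ι) : MemDilatedHull p (u ∘ e) x := by
  obtain ⟨w, hw₀, hw₁, hwx⟩ := h
  exact ⟨w ∘ e, fun k => hw₀ (e k), by simpa [e.sum_comp] using hw₁,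
    by simpa [e.sum_comp (fun i => w i • u i)] using hwx⟩

lemma exists_affineIndependent_memDilatedHull [FiniteDimensional ℝ E] {p : ℝ} (hp : 0 ≤ p)
    {s : Set E} {x : E} (hx : x ∈ p • convexHull ℝ s) :
    ∃ (κ : Type u) (_ : Fintype κ) (u : κ → E), range u ⊆ s ∧ AffineIndependent ℝ u ∧
      MemDilatedHull p u x := by
  obtain ⟨y, hy, rfl⟩ := hx
  obtain ⟨κ, _, u, w, hus, hu, hw₀, hw₁, rfl⟩ := eq_pos_convex_span_of_mem_convexHull hy
  refine ⟨κ, inferInstance, u, hus, hu, fun k => p * w k, fun k => mul_nonneg hp (hw₀ k).le,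
    by rw [← Finset.mul_sum, hw₁, mul_one], ?_⟩
  simp only [Finset.smul_sum, mul_smul]

lemma memDilatedHull_sub_vertex [DecidableEq ι] (u : ι → E) {w : ι → ℝ} (hw : ∀ i, 0 ≤ w i)
    {j : ι} (hj : 1 ≤ w j) :
    MemDilatedHull (∑ i, w i - 1) u (∑ i, w i • u i - u j) := by
  refine ⟨w - Pi.single j 1, fun i => ?_, ?_, ?_⟩
  · rcases eq_or_ne i j with rfl | hij
    · simpa using hj
    · simpa [hij] using hw i
  · simp [Finset.sum_sub_distrib]
  · simp [sub_smul, Finset.sum_sub_distrib, Pi.single_apply]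

/-- The new weights are `(αⱼ - αᵢ) / (1 - αᵢ)` off `i` and `αᵢ / (1 - αᵢ)` at `i`. -/
lemma memDilatedHull_update [DecidableEq ι] (u : ι → E) {α : ι → ℝ} {i : ι} (hi₀ : 0 ≤ α i)
    (hi₁ : α i < 1) (hmin : ∀ j, α i ≤ α j) (hsum : ∑ j, (1 - α j) = 1) :
    MemDilatedHull (∑ j, α j) (update u i (∑ j, (1 - α j) • u j)) (∑ j, α j • u j) := by
  have hs : 1 - α i ≠ 0 := by linarith
  set β : ι → ℝ := fun j => (α j - α i) / (1 - α i)
  set c := α i / (1 - α i)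
  have hβ : ∀ j, update β i c j = β j + (Pi.single i c : ι → ℝ) j := by
    intro j; rcases eq_or_ne j i with rfl | hji <;> simp [*, β]
  have hβu : ∀ j, update β i c j • update u i (∑ j, (1 - α j) • u j) j =
      β j • u j + (Pi.single i (c • ∑ j, (1 - α j) • u j) : ι → E) j := by
    intro j; rcases eq_or_ne j i with rfl | hji <;> simp [*, β]
  refine ⟨update β i c, fun j => ?_, ?_, ?_⟩
  · rcases eq_or_ne j i with rfl | hji
    · simpa using div_nonneg hi₀ (by linarith)
    · simpa [hji] using div_nonneg (by linarith [hmin j]) (by linarith)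
  · simp only [hβ, Finset.sum_add_distrib, Finset.sum_pi_single', Finset.mem_univ, if_true, β, c,
      ← Finset.sum_div, Finset.sum_sub_distrib] at hsum ⊢
    simp only [Finset.sum_const, Finset.card_univ, nsmul_eq_mul, mul_one] at hsum ⊢
    rw [← add_div, div_eq_iff hs]
    linear_combination (-α i) * hsum
  · rw [Finset.sum_congr rfl fun j _ => hβu j, Finset.sum_add_distrib, Finset.sum_pi_single']
    simp only [Finset.mem_univ, if_true, β, c, div_eq_inv_mul, mul_smul, ← Finset.smul_sum,
      sub_smul, Finset.sum_sub_distrib, one_smul]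
    rw [← smul_add, inv_smul_eq_iff₀ hs]
    module

end DilatedHull

def doubleSignedArea {R : Type*} [CommRing R] (u : Fin 3 → R × R) : R :=
  (u 1 - u 0).1 * (u 2 - u 0).2 - (u 1 - u 0).2 * (u 2 - u 0).1

lemma doubleSignedArea_update_sum {R : Type*} [CommRing R] (u : Fin 3 → R × R) {γ : Fin 3 → R}
    (hγ : ∑ j, γ j = 1) (i : Fin 3) :
    doubleSignedArea (update u i (∑ j, γ j • u j)) = γ i * doubleSignedArea u := by
  have hγ₀ : γ 0 = 1 - γ 1 - γ 2 := by rw [Fin.sum_univ_three] at hγ; linear_combination hγ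
  fin_cases i <;>
  · simp only [doubleSignedArea, update, Fin.isValue, Fin.zero_eta, Fin.mk_one, Fin.reduceFinMk,
      Fin.reduceEq, one_ne_zero, zero_ne_one, ↓reduceDIte, Fin.sum_univ_three, hγ₀, Prod.fst_sub,
      Prod.snd_sub, Prod.fst_add, Prod.snd_add, Prod.smul_fst, Prod.smul_snd, smul_eq_mul]
    ring

lemma AffineIndependent.doubleSignedArea_ne_zero {K : Type*} [Field K] {u : Fin 3 → K × K}
    (hu : AffineIndependent K u) : doubleSignedArea u ≠ 0 := by
  set d₁ := u 1 - u 0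
  set d₂ := u 2 - u 0
  have key (s t : K) (h₁ : s * d₁.1 + t * d₂.1 = 0) (h₂ : s * d₁.2 + t * d₂.2 = 0) :
      s = 0 ∧ t = 0 := by
    have h : s • d₁ + t • d₂ = 0 := Prod.ext (by simpa using h₁) (by simpa using h₂)
    have hw := hu.eq_zero_of_sum_eq_zero (s := univ) (w := ![-(s + t), s, t])
      (by simp [Fin.sum_univ_three])
      (by rw [Fin.sum_univ_three, ← h]; simp only [Matrix.cons_val, d₁, d₂]; module)
    exact ⟨hw 1 (mem_univ _), hw 2 (mem_univ _)⟩
  intro (hA : d₁.1 * d₂.2 - d₁.2 * d₂.1 = 0)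
  obtain ⟨-, h₁₂⟩ := key d₂.2 (-d₁.2) (by linear_combination hA) (by ring)
  obtain ⟨-, h₁₁⟩ := key d₂.1 (-d₁.1) (by ring) (by linear_combination -hA)
  exact one_ne_zero (key 1 0 (by linear_combination -h₁₁) (by linear_combination -h₁₂)).1

lemma AffineIndependent.card_le_three {ι : Type*} [Fintype ι] {u : ι → ℝ × ℝ}
    (hu : AffineIndependent ℝ u) : Fintype.card ι ≤ 3 := by
  have := (vectorSpan ℝ (range u)).finrank_le
  rw [Module.finrank_prod, Module.finrank_self] at this
  linarith [hu.card_le_finrank_succ]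

def embHom : ℤ × ℤ →+ ℝ × ℝ := (Int.castAddHom ℝ).prodMap (Int.castAddHom ℝ)

lemma coe_embHom : ⇑embHom = emb := rfl

lemma emb_injective : Injective emb := fun a b h => by
  simp only [emb, Prod.ext_iff, Int.cast_inj] at h
  exact Prod.ext h.1 h.2

lemma doubleSignedArea_comp_emb (v : Fin 3 → ℤ × ℤ) :
    doubleSignedArea (emb ∘ v) = doubleSignedArea v := by
  simp [doubleSignedArea, emb]

lemma mpow_mono {M N : Set (ℤ × ℤ)} (h : M ⊆ N) : ∀ p, mpow M p ⊆ mpow N p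
  | 0 => subset_rfl
  | p + 1 => Set.add_subset_add h (mpow_mono h p)

lemma mpow_one (N : Set (ℤ × ℤ)) : mpow N 1 = N := by simp [mpow]

lemma convexHull_image_mpow_succ (N : Set (ℤ × ℤ)) :
    ∀ p : ℕ, convexHull ℝ (emb '' mpow N (p + 1)) = ((p + 1 : ℕ) : ℝ) • convexHull ℝ (emb '' N)
  | 0 => by simp [mpow_one]
  | p + 1 => by
    rw [mpow, ← coe_embHom, Set.image_add, convexHull_add, coe_embHom,
      convexHull_image_mpow_succ N p, Nat.cast_succ (p + 1),
      (convex_convexHull ℝ _).add_smul (by positivity) zero_le_one, one_smul, add_comm]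

def latticeHull {ι : Type*} (v : ι → ℤ × ℤ) : Set (ℤ × ℤ) :=
  emb ⁻¹' convexHull ℝ (range (emb ∘ v))

lemma vertex_mem_latticeHull {ι : Type*} (v : ι → ℤ × ℤ) (j : ι) : v j ∈ latticeHull v :=
  subset_convexHull ℝ _ (mem_range_self j)

lemma exists_latticeHull_subset_of_weights_lt_one {v : Fin 3 → ℤ × ℤ}
    (hv : doubleSignedArea v ≠ 0) {z : ℤ × ℤ} {α : Fin 3 → ℝ} (hα : ∀ j, α j < 1)
    (hαsum : ∑ j, α j = 2) (hαz : ∑ j, α j • (emb ∘ v) j = emb z) :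
    ∃ v' : Fin 3 → ℤ × ℤ, doubleSignedArea v' ≠ 0 ∧
      (doubleSignedArea v').natAbs < (doubleSignedArea v).natAbs ∧
      MemDilatedHull 2 (emb ∘ v') (emb z) ∧ latticeHull v' ⊆ latticeHull v := by
  obtain ⟨i, hmin⟩ := Finite.exists_min α
  have hi₀ : 0 < α i := by
    rw [Fin.sum_univ_three] at hαsum
    fin_cases i <;> simp only [Fin.zero_eta, Fin.mk_one, Fin.reduceFinMk, Fin.isValue] <;>
      linarith [hα 0, hα 1, hα 2]
  have hsum : ∑ j, (1 - α j) = 1 := by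
    rw [Finset.sum_sub_distrib, hαsum]; norm_num
  set z' := ∑ j, v j - z
  have hz' : emb z' = ∑ j, (1 - α j) • (emb ∘ v) j := by
    rw [← coe_embHom, map_sub, map_sum, coe_embHom, ← hαz]
    simp [sub_smul, Finset.sum_sub_distrib]
  have hv' : emb ∘ update v i z' = update (emb ∘ v) i (∑ j, (1 - α j) • (emb ∘ v) j) := by
    rw [comp_update, hz']
  have harea : ((doubleSignedArea (update v i z') : ℤ) : ℝ) =
      (1 - α i) * ((doubleSignedArea v : ℤ) : ℝ) := by
    rw [← doubleSignedArea_comp_emb, hv', doubleSignedArea_update_sum _ hsum,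
      doubleSignedArea_comp_emb]
  refine ⟨update v i z', ?_, ?_, ?_, ?_⟩
  · have : ((doubleSignedArea (update v i z') : ℤ) : ℝ) ≠ 0 := by
      rw [harea]; exact mul_ne_zero (by linarith [hα i]) (by exact_mod_cast hv)
    exact_mod_cast this
  · have : |((doubleSignedArea (update v i z') : ℤ) : ℝ)| < |((doubleSignedArea v : ℤ) : ℝ)| := by
      rw [harea, abs_mul, abs_of_pos (by linarith [hα i])]
      exact mul_lt_of_lt_one_left (abs_pos.2 (by exact_mod_cast hv)) (by linarith)
    zify; exact_mod_cast this
  · rw [hv', ← hαsum, ← hαz]; exact memDilatedHull_update _ hi₀.le (hα i) hmin hsum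
  · refine preimage_mono (convexHull_min ?_ (convex_convexHull ℝ _))
    rw [hv', range_subset_iff]
    intro j
    rcases eq_or_ne j i with rfl | hji
    · rw [update_self]
      exact MemDilatedHull.mem_convexHull
        ⟨fun j => 1 - α j, fun j => by linarith [hα j], hsum, rfl⟩
    · rw [update_of_ne hji]
      exact subset_convexHull ℝ _ (mem_range_self j)

theorem mem_latticeHull_add_latticeHull {v : Fin 3 → ℤ × ℤ} (hv : doubleSignedArea v ≠ 0)
    {z : ℤ × ℤ} (hz : MemDilatedHull 2 (emb ∘ v) (emb z)) :
    z ∈ latticeHull v + latticeHull v := by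
  induction h : (doubleSignedArea v).natAbs using Nat.strong_induction_on generalizing v with
  | _ n ih =>
  obtain ⟨α, hα₀, hαsum, hαz⟩ := hz
  by_cases hbig : ∃ j, 1 ≤ α j
  · obtain ⟨j, hj⟩ := hbig
    have hrest := memDilatedHull_sub_vertex (emb ∘ v) hα₀ hj
    rw [hαsum, hαz, show (2 : ℝ) - 1 = 1 by norm_num] at hrest
    refine ⟨v j, vertex_mem_latticeHull v j, z - v j, ?_, add_sub_cancel _ _⟩
    simpa [latticeHull, ← coe_embHom] using hrest.mem_convexHull
  simp only [not_exists, not_le] at hbig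
  obtain ⟨v', hv'ne, hlt, hz', hsub⟩ :=
    exists_latticeHull_subset_of_weights_lt_one hv hbig hαsum hαz
  exact Set.add_subset_add hsub hsub (ih _ (h ▸ hlt) hv'ne hz' rfl)

theorem mem_latticeHull_add_latticeHull_of_card_eq_three {ι : Type*} [Fintype ι]
    (hι : Fintype.card ι = 3) {v : ι → ℤ × ℤ} (hv : AffineIndependent ℝ (emb ∘ v))
    {z : ℤ × ℤ} (hz : MemDilatedHull 2 (emb ∘ v) (emb z)) :
    z ∈ latticeHull v + latticeHull v := by
  let e : Fin 3 ≃ ι := (Fintype.equivFinOfCardEq hι).symm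
  have harea : doubleSignedArea (v ∘ e) ≠ 0 := by
    rw [← Int.cast_ne_zero (α := ℝ), ← doubleSignedArea_comp_emb]
    exact (hv.comp_embedding e.toEmbedding).doubleSignedArea_ne_zero
  simpa [latticeHull, ← comp_assoc, e.surjective.range_comp] using
    mem_latticeHull_add_latticeHull harea (hz.comp_equiv e)

theorem mem_mpow_latticeHull {ι : Type*} [Fintype ι] {v : ι → ℤ × ℤ}
    (hv : AffineIndependent ℝ (emb ∘ v)) :
    ∀ (p : ℕ) {z : ℤ × ℤ}, MemDilatedHull p (emb ∘ v) (emb z) → z ∈ mpow (latticeHull v) p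
  | 0, z, ⟨w, hw₀, hwsum, hwz⟩ => by
    have hw : ∀ i, w i = 0 := fun i =>
      (Finset.sum_eq_zero_iff_of_nonneg fun i _ => hw₀ i).1 (by exact_mod_cast hwsum) i (mem_univ i)
    refine emb_injective ?_
    rw [← hwz]
    simp [hw, ← coe_embHom]
  | p + 1, z, ⟨w, hw₀, hwsum, hwz⟩ => by
    classical
    by_cases hbig : ∃ j, 1 ≤ w j
    · obtain ⟨j, hj⟩ := hbig
      have hrest := memDilatedHull_sub_vertex (emb ∘ v) hw₀ hj
      rw [hwsum, hwz, Nat.cast_succ, add_sub_cancel_right] at hrest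
      refine ⟨v j, vertex_mem_latticeHull v j, z - v j, ?_, add_sub_cancel _ _⟩
      exact mem_mpow_latticeHull hv p (by simpa [← coe_embHom] using hrest)
    simp only [not_exists, not_le] at hbig
    have hlt : p + 1 < Fintype.card ι := by
      have hne := Finset.nonempty_of_sum_ne_zero (s := univ) (f := w) (by rw [hwsum]; positivity)
      have : ((p + 1 : ℕ) : ℝ) < Fintype.card ι := by
        calc ((p + 1 : ℕ) : ℝ) = ∑ i, w i := hwsum.symm
          _ < ∑ _i : ι, (1 : ℝ) := Finset.sum_lt_sum_of_nonempty hne fun i _ => hbig i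
          _ = Fintype.card ι := by simp
      exact_mod_cast this
    have hcard := hv.card_le_three
    obtain rfl | rfl : p = 0 ∨ p = 1 := by omega
    · rw [mpow_one]
      exact (show MemDilatedHull 1 _ _ from ⟨w, hw₀, by simpa using hwsum, hwz⟩).mem_convexHull
    · simpa [mpow, mpow_one] using mem_latticeHull_add_latticeHull_of_card_eq_three (by omega) hv
        ⟨w, hw₀, by simpa [one_add_one_eq_two] using hwsum, hwz⟩

theorem stmt_12_general (N : Set (ℤ × ℤ)) (hconv : LatticeConvex N) (p : ℕ) :
    LatticeConvex (mpow N p) := by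
  intro z
  refine ⟨fun hz => subset_convexHull ℝ _ (mem_image_of_mem emb hz), fun hz => ?_⟩
  cases p with
  | zero => simpa [mpow, emb_injective.eq_iff] using hz
  | succ p =>
    rw [convexHull_image_mpow_succ] at hz
    obtain ⟨κ, _, u, huN, hu, hz⟩ := exists_affineIndependent_memDilatedHull (by positivity) hz
    choose v hvN hvu using fun k => huN (mem_range_self k)
    obtain rfl : emb ∘ v = u := funext hvu
    refine mpow_mono (fun x hx => (hconv x).2 ?_) _ (mem_mpow_latticeHull hu _ hz)
    exact convexHull_mono (range_subset_iff.2 fun k => mem_image_of_mem emb (hvN k)) hx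

theorem stmt_12 (N : Set (ℤ × ℤ)) (hN : N.Finite) (hne : N.Nonempty)
    (h0 : (0 : ℤ × ℤ) ∈ N) (hconv : LatticeConvex N) (p : ℕ) :
    LatticeConvex (mpow N p) :=
  stmt_12_general N hconv p
end
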